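/- arXiv:2510.21599 — 2 statements merged into one kernel-verified Lean document; each statement's English description precedes it below -/
import Mathlib

section
/- For every n ≥ 2, every i ∈ {1,…,n} and every binary string s ∈ {0,1}^n with k := s_1 + ⋯ + s_n ≤ n − 1, the full contraction Σ_{(i',c') ∈ Q} [G^{(1)}(s_1) · G^{(2)}(s_2) ⋯ G^{(n)}(s_n)]_{i,(i',c')} equals ε · k! · (n − k − 1)! / n!, where ε = −1 if s_i = 0 and ε = +1 if s_i = 1; that is, the tensor train with these cores (contracted on the right with the all-ones vector) represents the modified weighted-coalitional tensor W̃(i, s) := ± k!(n−k−1)!/n!, with positive sign exactly when feature i belongs to the coalition encoded by s. -/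
open Finset

noncomputable section

/-- First-layer core `G^{(1)}(b)` of the TT representation of the modified weighted
coalitional tensor.  Rows are indexed by the feature `i` to be explained (0-based:
feature 1 is index `0`), columns by states `(i', c')` recording the feature to be
explained and the running coalition count. -/
def G1 (n : ℕ) (b : Bool) : Matrix (Fin n) (Fin n × Fin n) ℝ :=
  fun i p =>
    if b then
      (if p.1 = i ∧ (p.2 : ℕ) = 1 then ((n - 2).factorial : ℝ) else 0)
    else
      (if p.1 = i ∧ (p.2 : ℕ) = 0 then
        (if (i : ℕ) = 0 then (-1 : ℝ) else 1) * ((n - 1).factorial : ℝ) else 0)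

/-- Core `G^{(j)}(b)` at layer `j` (1-based, `2 ≤ j ≤ n`).  States `(i, c)` record the
feature `i` (0-based) to be explained and the coalition count `c ∈ {0,…,n−1}`. -/
def Gmid (n j : ℕ) (b : Bool) : Matrix (Fin n × Fin n) (Fin n × Fin n) ℝ :=
  fun p q =>
    if b then
      (if q.1 = p.1 ∧ (p.2 : ℕ) ≤ n - 2 ∧ (q.2 : ℕ) = (p.2 : ℕ) + 1 then
        ((p.2 : ℕ) + 1 : ℝ) / ((j : ℝ) * ((n - (p.2 : ℕ) - 1 : ℕ) : ℝ)) else 0)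
    else
      (if q = p then (if j = (p.1 : ℕ) + 1 then (-1 : ℝ) else 1) / (j : ℝ) else 0)

/-- The matrix product `G^{(1)}(s_1) · G^{(2)}(s_2) ⋯ G^{(j)}(s_j)` of the cores along
a bit string `s ∈ {0,1}^j` (the value at `j = 0` is junk). -/
def ttProd (n : ℕ) : (j : ℕ) → (Fin j → Bool) → Matrix (Fin n) (Fin n × Fin n) ℝ
  | 0, _ => 0
  | 1, s => G1 n (s 0)
  | (j + 2), s =>
      ttProd n (j + 1) (fun t => s t.castSucc) * Gmid n (j + 2) (s (Fin.last (j + 1)))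

/-- Number of `1`-bits of `s`, i.e. the size of the coalition encoded by `s`. -/
def trueCount {j : ℕ} (s : Fin j → Bool) : ℕ :=
  (Finset.univ.filter (fun t => s t = true)).card


lemma trueCount_eq_sum {j : ℕ} (s : Fin j → Bool) :
    trueCount s = ∑ t : Fin j, if s t then 1 else 0 := by
  rw [trueCount, Finset.card_filter]

lemma trueCount_one (s : Fin 1 → Bool) : trueCount s = if s 0 then 1 else 0 := by
  rw [trueCount_eq_sum, Fin.sum_univ_one]

lemma trueCount_succ {m : ℕ} (s : Fin (m+1) → Bool) :
    trueCount s = trueCount (fun t => s t.castSucc) + (if s (Fin.last m) then 1 else 0) := by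
  rw [trueCount_eq_sum, trueCount_eq_sum, Fin.sum_univ_castSucc]

lemma ttProd_apply (n : ℕ) (hn : 2 ≤ n) :
    ∀ (j : ℕ), 1 ≤ j → j ≤ n → ∀ (s : Fin j → Bool), trueCount s ≤ n - 1 →
      ∀ (i : Fin n) (p : Fin n × Fin n),
      ttProd n j s i p =
        if p.1 = i ∧ (p.2 : ℕ) = trueCount s then
          (if h : (i : ℕ) < j then (if s ⟨i, h⟩ then (1:ℝ) else -1) else 1) *
            ((((trueCount s).factorial * (n - trueCount s - 1).factorial : ℕ) : ℝ) /
              (j.factorial : ℝ))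
        else 0 := by
  intro j
  induction j with
  | zero => omega
  | succ m ih =>
    cases m with
    | zero =>
      -- base case j = 1
      intro _ _ s hk i p
      have hs : ttProd n 1 s = G1 n (s 0) := rfl
      rw [hs, trueCount_one]
      cases hb : s 0 with
      | false =>
        simp only [G1, hb, if_false, Bool.false_eq_true]
        by_cases hi : (i:ℕ) < 1
        · have h0 : (⟨(i:ℕ), hi⟩ : Fin 1) = 0 := by ext; omega
          have hi0 : (i:ℕ) = 0 := by omega
          simp [hi, h0, hb, hi0, Nat.factorial]
        · have hi0 : ¬ ((i:ℕ) = 0) := by omega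
          simp [hi, hi0, Nat.factorial]
      | true =>
        simp only [G1, hb, if_true]
        by_cases hi : (i:ℕ) < 1
        · have h0 : (⟨(i:ℕ), hi⟩ : Fin 1) = 0 := by ext; omega
          have h21 : n - 1 - 1 = n - 2 := by omega
          simp [hi, h0, hb, h21, Nat.factorial]
        · have h21 : n - 1 - 1 = n - 2 := by omega
          simp [hi, h21, Nat.factorial]
    | succ m' =>
      -- inductive step j = m' + 2
      intro _ hjn s hk i q
      set b := s (Fin.last (m' + 1)) with hbdef
      set s' : Fin (m' + 1) → Bool := fun t => s t.castSucc with hs'def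
      have htc : trueCount s = trueCount s' + (if b then 1 else 0) := trueCount_succ s
      set k' := trueCount s' with hk'def
      have hk' : k' ≤ n - 1 := by omega
      have hk'n : k' < n := by omega
      have hprod : ttProd n (m' + 1 + 1) s =
          ttProd n (m' + 1) s' * Gmid n (m' + 1 + 1) b := rfl
      rw [hprod, Matrix.mul_apply]
      set p0 : Fin n × Fin n := (i, ⟨k', hk'n⟩) with hp0
      rw [Finset.sum_eq_single p0]
      rotate_left
      · intro pp _ hpp
        rw [ih (by omega) (by omega) s' hk' i pp]
        have : ¬ (pp.1 = i ∧ (pp.2 : ℕ) = k') := by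
          intro ⟨h1, h2⟩
          apply hpp
          rw [hp0]
          ext
          · exact congrArg Fin.val h1
          · exact h2
        rw [if_neg this, zero_mul]
      · intro h; exact absurd (Finset.mem_univ p0) h
      rw [ih (by omega) (by omega) s' hk' i p0]
      have hcond : p0.1 = i ∧ (p0.2 : ℕ) = k' := ⟨rfl, rfl⟩
      rw [if_pos hcond]
      have hm2 : ((m' + 1 + 1 : ℕ) : ℝ) ≠ 0 := by positivity
      have hfacm1 : ((m' + 1).factorial : ℝ) ≠ 0 := by
        exact_mod_cast Nat.factorial_ne_zero _
      have hfacm2 : ((m' + 1 + 1).factorial : ℝ) ≠ 0 := by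
        exact_mod_cast Nat.factorial_ne_zero _
      -- sign bookkeeping
      have hsign : ∀ (h : (i:ℕ) < m' + 1),
          s' ⟨(i:ℕ), h⟩ = s ⟨(i:ℕ), by omega⟩ := by
        intro h
        rw [hs'def]
        congr 1
      cases hbv : b with
      | false =>
        have htc0 : trueCount s = k' := by simp [htc, hbv]
        rw [htc0]
        simp only [Gmid, hbv, if_false, Bool.false_eq_true]
        by_cases hq : q = p0
        · rw [if_pos hq, hq]
          have hcond2 : p0.1 = i ∧ (p0.2 : ℕ) = k' := ⟨rfl, rfl⟩
          rw [if_pos hcond2]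
          have hfac : ((m' + 1 + 1).factorial : ℝ)
              = ((m' + 1 + 1 : ℕ) : ℝ) * ((m' + 1).factorial : ℝ) := by
            rw [show (m' + 1 + 1).factorial = (m' + 1 + 1) * (m' + 1).factorial from rfl]
            push_cast; ring
          by_cases hi : (i:ℕ) < m' + 1
          · have hi2 : (i:ℕ) < m' + 2 := by omega
            have hne : ¬ (m' + 1 + 1 = (i:ℕ) + 1) := by omega
            rw [dif_pos hi, dif_pos hi2, hsign hi, if_neg hne]
            have hbit : s ⟨(i:ℕ), by omega⟩ = s ⟨(i:ℕ), hi2⟩ := rfl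
            rw [hbit]
            rw [hfac]
            cases hsv : s ⟨(i:ℕ), hi2⟩ <;> · field_simp; ring
          · by_cases hi2 : (i:ℕ) < m' + 2
            · -- i = m' + 1, last layer, bit is false
              have hieq : (i:ℕ) = m' + 1 := by omega
              have heq : m' + 1 + 1 = (i:ℕ) + 1 := by omega
              rw [dif_neg hi, dif_pos hi2, if_pos heq]
              have hlast : (⟨(i:ℕ), hi2⟩ : Fin (m' + 1 + 1)) = Fin.last (m' + 1) := by
                ext; simpa using hieq
              rw [hlast, ← hbdef, hbv]
              rw [hfac]
              simp only [Bool.false_eq_true, if_false]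
              field_simp; ring
            · have hne : ¬ (m' + 1 + 1 = (i:ℕ) + 1) := by omega
              rw [dif_neg hi, dif_neg hi2, if_neg hne]
              rw [hfac]
              field_simp; ring
        · rw [if_neg hq, mul_zero]
          have : ¬ (q.1 = i ∧ (q.2 : ℕ) = k') := by
            intro ⟨h1, h2⟩
            apply hq
            rw [hp0]
            refine Prod.ext h1 (Fin.ext ?_)
            simpa using h2
          rw [if_neg this]
      | true =>
        have htc1 : trueCount s = k' + 1 := by simp [htc, hbv]
        rw [htc1]
        have hk'2 : k' ≤ n - 2 := by omega
        simp only [Gmid, hbv, if_true]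
        by_cases hq : q.1 = i ∧ (q.2 : ℕ) = k' + 1
        · have hcondg : q.1 = p0.1 ∧ (p0.2 : ℕ) ≤ n - 2 ∧ (q.2 : ℕ) = (p0.2 : ℕ) + 1 := by
            refine ⟨hq.1, hk'2, hq.2⟩
          rw [if_pos hcondg, if_pos hq]
          have hp02 : ((p0.2 : ℕ) : ℝ) = (k' : ℝ) := by norm_num [hp0]
          -- numeric facts
          have hsub1 : n - (k' : ℕ) - 1 = (n - k' - 2) + 1 := by omega
          have hsub2 : n - (k' + 1) - 1 = n - k' - 2 := by omega
          have hfacn : (n - k' - 1).factorial = (n - k' - 1) * (n - k' - 2).factorial := by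
            rw [hsub1, Nat.factorial_succ, ← hsub1]
          have hfacm : (m' + 1 + 1).factorial = (m' + 1 + 1) * (m' + 1).factorial := rfl
          have hfack : (k' + 1).factorial = (k' + 1) * k'.factorial := rfl
          have hnk1 : ((n - k' - 1 : ℕ) : ℝ) ≠ 0 := by
            have : 1 ≤ n - k' - 1 := by omega
            positivity
          have hsignsame : (if h : (i:ℕ) < m' + 1 then (if s' ⟨(i:ℕ), h⟩ then (1:ℝ) else -1) else 1)
              = (if h : (i:ℕ) < m' + 2 then (if s ⟨(i:ℕ), h⟩ then (1:ℝ) else -1) else 1) := by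
            by_cases hi : (i:ℕ) < m' + 1
            · have hi2 : (i:ℕ) < m' + 2 := by omega
              rw [dif_pos hi, dif_pos hi2, hsign hi]
            · by_cases hi2 : (i:ℕ) < m' + 2
              · have hieq : (i:ℕ) = m' + 1 := by omega
                have hlast : (⟨(i:ℕ), hi2⟩ : Fin (m' + 1 + 1)) = Fin.last (m' + 1) := by
                  ext; simpa using hieq
                rw [dif_neg hi, dif_pos hi2, hlast, ← hbdef, hbv, if_pos rfl]
              · rw [dif_neg hi, dif_neg hi2]
          rw [← hsignsame]
          rw [hsub2]
          rw [← hk'def]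
          rw [mul_assoc]
          congr 1
          push_cast [hfacn, hfacm, hfack]
          rw [show ((p0.2 : ℕ)) = k' from rfl]
          field_simp
        · rw [if_neg hq]
          have : ¬ (q.1 = p0.1 ∧ (p0.2 : ℕ) ≤ n - 2 ∧ (q.2 : ℕ) = (p0.2 : ℕ) + 1) := by
            intro ⟨h1, _, h3⟩
            exact hq ⟨h1, h3⟩
          rw [if_neg this, mul_zero]

end

/-- Contracting the full tensor-train product of the cores on the right with the
all-ones vector yields the modified weighted-coalitional tensor
`W̃(i, s) = ± k!(n−k−1)!/n!`, with positive sign exactly when feature `i` belongs to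
the coalition encoded by `s`. -/
theorem ttProd_full_contraction_eq_modified_weighted_coalitional
    (n : ℕ) (hn : 2 ≤ n) (s : Fin n → Bool) (hk : trueCount s ≤ n - 1) (i : Fin n) :
    ∑ p : Fin n × Fin n, ttProd n n s i p =
      (if s i then (1 : ℝ) else -1) *
        ((((trueCount s).factorial * (n - trueCount s - 1).factorial : ℕ) : ℝ) /
          (n.factorial : ℝ)) := by
  have hkn : trueCount s < n := by omega
  have key := ttProd_apply n hn n (by omega) (le_refl n) s hk i
  set p0 : Fin n × Fin n := (i, ⟨trueCount s, hkn⟩) with hp0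
  rw [Finset.sum_congr rfl (fun p _ => key p)]
  rw [Finset.sum_eq_single p0]
  rotate_left
  · intro pp _ hpp
    have : ¬ (pp.1 = i ∧ (pp.2 : ℕ) = trueCount s) := by
      intro ⟨h1, h2⟩
      apply hpp
      rw [hp0]
      refine Prod.ext h1 (Fin.ext ?_)
      simpa using h2
    rw [if_neg this]
  · intro h; exact absurd (Finset.mem_univ p0) h
  have hcond : p0.1 = i ∧ (p0.2 : ℕ) = trueCount s := ⟨rfl, rfl⟩
  rw [if_pos hcond, dif_pos i.isLt]
end

section
/- Let M be a tensor-train model with cores A^{(j)}, let P be a tensor-train distribution with cores B^{(j)}, and let W̃ be any tensor given in tensor-train form by cores H^{(j)}(b). Then for every input x ∈ D and every feature i ∈ {1,…,n}: Σ_{s ∈ {0,1}^n} W̃(i, s) · V_M(x, S_s; P) = [ K^{(1)} · K^{(2)} ⋯ K^{(n)} ]_{i,1}, where S_s := { l : s_l = 1 } and K^{(j)} := Σ_{b ∈ {0,1}} H^{(j)}(b) ⊗ ( Σ_{σ ∈ [N_j]} A^{(j)}(b = 1 ? x_j : σ) ⊗ B^{(j)}(σ) ); i.e., the marginal SHAP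 tensor of a tensor-train model under a tensor-train distribution is itself represented by a tensor train whose cores are the contractions of the weight cores, model cores and distribution cores. -/
open Finset

noncomputable section

/-- The merged input `do(x, S, x')`: takes `x_i` for `i ∈ S`, else `x'_i`. -/
def mergeDo {n : ℕ} {N : Fin n → ℕ} (x x' : ∀ i, Fin (N i)) (S : Finset (Fin n)) :
    ∀ i, Fin (N i) :=
  fun i => if i ∈ S then x i else x' i

/-- The marginal value function `V_M(x, S; P) = Σ_{x'} P(x') · M(do(x,S,x'))`. -/
def margValue {n : ℕ} {N : Fin n → ℕ} (M P : (∀ i, Fin (N i)) → ℝ)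
    (x : ∀ i, Fin (N i)) (S : Finset (Fin n)) : ℝ :=
  ∑ x' : ∀ i, Fin (N i), P x' * M (mergeDo x x' S)

/-- Ordered matrix product `E 0 · E 1 ⋯ E (j−1)` of a layered family of matrices. -/
def layerProd (ι : ℕ → Type) [∀ j, Fintype (ι j)] [∀ j, DecidableEq (ι j)]
    (E : ∀ j, Matrix (ι j) (ι (j + 1)) ℝ) : ∀ j, Matrix (ι 0) (ι j) ℝ
  | 0 => 1
  | j + 1 => layerProd ι E j * E j

lemma layerProd_succ (ι : ℕ → Type) [∀ j, Fintype (ι j)] [∀ j, DecidableEq (ι j)]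
    (E : ∀ j, Matrix (ι j) (ι (j + 1)) ℝ) (m : ℕ) :
    layerProd ι E (m + 1) = layerProd ι E m * E m := rfl

lemma layerProd_congr (ι : ℕ → Type) [∀ j, Fintype (ι j)] [∀ j, DecidableEq (ι j)]
    (E E' : ∀ j, Matrix (ι j) (ι (j + 1)) ℝ) (m : ℕ) (h : ∀ j, j < m → E j = E' j) :
    layerProd ι E m = layerProd ι E' m := by
  induction m with
  | zero => rfl
  | succ m ih =>
    rw [layerProd_succ, layerProd_succ,
      ih (fun j hj => h j (hj.trans m.lt_succ_self)), h m m.lt_succ_self]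

lemma layerProd_kron (ι κ : ℕ → Type) [∀ j, Fintype (ι j)] [∀ j, DecidableEq (ι j)]
    [∀ j, Fintype (κ j)] [∀ j, DecidableEq (κ j)]
    (E : ∀ j, Matrix (ι j) (ι (j + 1)) ℝ) (F : ∀ j, Matrix (κ j) (κ (j + 1)) ℝ) :
    ∀ (m : ℕ) (a : ι 0) (b : κ 0) (c : ι m × κ m),
      layerProd (fun j => ι j × κ j)
          (fun j => Matrix.kroneckerMap (· * ·) (E j) (F j)) m (a, b) c
        = layerProd ι E m a c.1 * layerProd κ F m b c.2 := by
  intro m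
  induction m with
  | zero =>
    rintro a b ⟨c1, c2⟩
    show (1 : Matrix _ _ ℝ) (a, b) (c1, c2) = (1 : Matrix _ _ ℝ) a c1 * (1 : Matrix _ _ ℝ) b c2
    by_cases h1 : a = c1 <;> by_cases h2 : b = c2 <;>
      simp [Matrix.one_apply, Prod.ext_iff, h1, h2]
  | succ m ih =>
    rintro a b ⟨c1, c2⟩
    rw [layerProd_succ, layerProd_succ, layerProd_succ, Matrix.mul_apply, Matrix.mul_apply,
      Matrix.mul_apply, Fintype.sum_prod_type, Finset.sum_mul_sum]
    refine Finset.sum_congr rfl fun p1 _ => Finset.sum_congr rfl fun p2 _ => ?_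
    rw [ih a b (p1, p2), Matrix.kroneckerMap_apply]
    ring

lemma layerProd_sum (ι : ℕ → Type) [∀ j, Fintype (ι j)] [∀ j, DecidableEq (ι j)]
    (T : ℕ → Type) [∀ j, Fintype (T j)] [∀ j, DecidableEq (T j)]
    (C : ∀ j, T j → Matrix (ι j) (ι (j + 1)) ℝ) :
    ∀ (m : ℕ) (a : ι 0) (b : ι m),
      layerProd ι (fun j => ∑ t, C j t) m a b
        = ∑ f : ∀ j : Fin m, T j,
            layerProd ι (fun j => if h : j < m then C j (f ⟨j, h⟩) else 0) m a b := by
  intro m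
  induction m with
  | zero =>
    intro a b
    rw [Fintype.sum_unique]
    rfl
  | succ m ih =>
    intro a b
    rw [layerProd_succ, Matrix.mul_apply]
    rw [← Equiv.sum_comp (Fin.snocEquiv (fun j : Fin (m + 1) => T j))
      (fun f => layerProd ι (fun j => if h : j < m + 1 then C j (f ⟨j, h⟩) else 0) (m + 1) a b),
      Fintype.sum_prod_type]
    have key : ∀ (t : T m) (g : ∀ j : Fin m, T j),
        layerProd ι (fun j => if h : j < m + 1 then
            C j (Fin.snocEquiv (fun j : Fin (m + 1) => T j) (t, g) ⟨j, h⟩) else 0) (m + 1) a b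
          = ∑ c, layerProd ι (fun j => if h : j < m then C j (g ⟨j, h⟩) else 0) m a c
              * C m t c b := by
      intro t g
      rw [layerProd_succ, Matrix.mul_apply]
      refine Finset.sum_congr rfl fun c _ => ?_
      have hcong : layerProd ι (fun j => if h : j < m + 1 then
            C j (Fin.snocEquiv (fun j : Fin (m + 1) => T j) (t, g) ⟨j, h⟩) else 0) m
          = layerProd ι (fun j => if h : j < m then C j (g ⟨j, h⟩) else 0) m := by
        refine layerProd_congr ι _ _ m fun j hj => ?_
        rw [dif_pos (hj.trans m.lt_succ_self), dif_pos hj]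
        simp only [Fin.snocEquiv_apply]
        exact congrArg (C j)
          (@Fin.snoc_castSucc m (fun i : Fin (m + 1) => T i) t g ⟨j, hj⟩)
      rw [hcong]
      congr 1
      show (if h : m < m + 1 then
          C m (Fin.snocEquiv (fun j : Fin (m + 1) => T j) (t, g) ⟨m, h⟩) else 0) c b
        = C m t c b
      rw [dif_pos m.lt_succ_self]
      simp only [Fin.snocEquiv_apply]
      exact congrArg (fun z => C m z c b)
        (@Fin.snoc_last m (fun i : Fin (m + 1) => T i) t g)
    refine Eq.trans ?_ (show
        (∑ t : T m, ∑ g : ∀ j : Fin m, T j,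
          layerProd ι (fun j => if h : j < m + 1 then
            C j (Fin.snocEquiv (fun j : Fin (m + 1) => T j) (t, g) ⟨j, h⟩) else 0) (m + 1) a b)
        = _ from rfl)
    simp only [key]
    simp only [ih, Matrix.sum_apply, Finset.sum_mul_sum]
    -- goal : ∑ c, ∑ f, ∑ t = ∑ t, ∑ g, ∑ c
    conv_lhs => rw [Finset.sum_comm]
    refine Eq.trans (Finset.sum_congr rfl fun f _ => Finset.sum_comm) ?_
    rw [Finset.sum_comm]

lemma sum_reorder4 {α β γ δ : Type} [Fintype α] [Fintype β] [Fintype γ] [Fintype δ]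
    (g : α → β → γ → δ → ℝ) :
    ∑ a, ∑ b, ∑ c, ∑ f, g a b c f = ∑ f, ∑ a, ∑ b, ∑ c, g a b c f := by
  refine Eq.trans (Finset.sum_congr rfl fun a _ =>
    Finset.sum_congr rfl fun b _ => Finset.sum_comm) ?_
  refine Eq.trans (Finset.sum_congr rfl fun a _ => Finset.sum_comm) ?_
  exact Finset.sum_comm

lemma sum_factor3 {A B Q1 Q2 Q3 : Type} [Fintype A] [Fintype B] [Fintype Q1] [Fintype Q2]
    [Fintype Q3] (F : Q1 → ℝ) (G : A → Q2 → ℝ) (K : B → Q3 → ℝ) :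
    (∑ q1, F q1) * ((∑ b, ∑ q3, K b q3) * (∑ a, ∑ q2, G a q2))
      = ∑ a : A, ∑ b : B, ∑ q : Q1 × (Q2 × Q3), F q.1 * (G a q.2.1 * K b q.2.2) := by
  simp only [Fintype.sum_prod_type]
  simp only [← Finset.mul_sum, ← Finset.sum_mul]
  ring

def boolProdEquiv (n : ℕ) (N : Fin n → ℕ) :
    ((Fin n → Bool) × (∀ j, Fin (N j))) ≃
      (∀ j : Fin n, Bool × Fin (if h : (j : ℕ) < n then N ⟨j, h⟩ else 1)) where
  toFun p j := (p.1 j, Fin.cast (dif_pos j.isLt).symm (p.2 j))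
  invFun f := (fun j => (f j).1, fun j => Fin.cast (dif_pos j.isLt) (f j).2)
  left_inv p := Prod.ext rfl (funext fun j => Fin.ext rfl)
  right_inv f := funext fun j => Prod.ext rfl (Fin.ext rfl)

/-- The marginal SHAP tensor of a tensor-train model under a tensor-train distribution,
weighted by a tensor-train weight tensor `W̃`, is itself represented by the tensor train
whose cores `K^{(j)} = Σ_b H^{(j)}(b) ⊗ (Σ_σ A^{(j)}(b ? x_j : σ) ⊗ B^{(j)}(σ))` contract
the weight cores, model cores and distribution cores. -/
theorem shapTensor_tensorTrain_representation
    (n : ℕ) (hn : 1 ≤ n) (N : Fin n → ℕ)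
    (d e r : ℕ → ℕ) (hd0 : d 0 = 1) (hdn : d n = 1) (he0 : e 0 = 1) (hen : e n = 1)
    (hr0 : r 0 = n) (hrn : r n = 1)
    (A : ∀ j : Fin n, Fin (N j) → Matrix (Fin (d j)) (Fin (d (j + 1))) ℝ)
    (B : ∀ j : Fin n, Fin (N j) → Matrix (Fin (e j)) (Fin (e (j + 1))) ℝ)
    (H : ∀ j : Fin n, Bool → Matrix (Fin (r j)) (Fin (r (j + 1))) ℝ)
    (M P : (∀ j, Fin (N j)) → ℝ)
    (hM : ∀ y : ∀ j, Fin (N j), M y =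
      ∑ a : Fin (d 0), ∑ b : Fin (d n),
        layerProd (fun j => Fin (d j))
          (fun j => if h : j < n then A ⟨j, h⟩ (y ⟨j, h⟩) else 0) n a b)
    (hP : ∀ y : ∀ j, Fin (N j), P y =
      ∑ a : Fin (e 0), ∑ b : Fin (e n),
        layerProd (fun j => Fin (e j))
          (fun j => if h : j < n then B ⟨j, h⟩ (y ⟨j, h⟩) else 0) n a b)
    (Wt : Fin n → (Fin n → Bool) → ℝ)
    (hW : ∀ (i : Fin n) (s : Fin n → Bool), Wt i s =
      ∑ q : Fin (r n),
        layerProd (fun j => Fin (r j))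
          (fun j => if h : j < n then H ⟨j, h⟩ (s ⟨j, h⟩) else 0) n
          (Fin.cast hr0.symm i) q)
    (x : ∀ j, Fin (N j)) (i : Fin n) :
    ∑ s : Fin n → Bool,
        Wt i s * margValue M P x (Finset.univ.filter (fun l => s l = true)) =
      ∑ a : Fin (d 0), ∑ b : Fin (e 0), ∑ q : Fin (r n) × (Fin (d n) × Fin (e n)),
        layerProd (fun j => Fin (r j) × (Fin (d j) × Fin (e j)))
          (fun j => if h : j < n then
              ∑ bb : Bool,
                Matrix.kroneckerMap (· * ·) (H ⟨j, h⟩ bb)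
                  (∑ σ : Fin (N ⟨j, h⟩),
                    Matrix.kroneckerMap (· * ·)
                      (A ⟨j, h⟩ (if bb then x ⟨j, h⟩ else σ))
                      (B ⟨j, h⟩ σ))
            else 0) n
          (Fin.cast hr0.symm i, (a, b)) q := by
  classical
  -- Step 1: the cores as a single sum over `Bool × Fin (Nxt j)`.
  have hK : (fun j : ℕ => if h : j < n then
        ∑ bb : Bool,
          Matrix.kroneckerMap (· * ·) (H ⟨j, h⟩ bb)
            (∑ σ : Fin (N ⟨j, h⟩),
              Matrix.kroneckerMap (· * ·) (A ⟨j, h⟩ (if bb then x ⟨j, h⟩ else σ))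
                (B ⟨j, h⟩ σ))
      else (0 : Matrix (Fin (r j) × (Fin (d j) × Fin (e j)))
              (Fin (r (j + 1)) × (Fin (d (j + 1)) × Fin (e (j + 1)))) ℝ))
      = (fun j : ℕ => ∑ t : Bool × Fin (if h : j < n then N ⟨j, h⟩ else 1),
          if h : j < n then
            Matrix.kroneckerMap (· * ·) (H ⟨j, h⟩ t.1)
              (Matrix.kroneckerMap (· * ·)
                (A ⟨j, h⟩ (if t.1 then x ⟨j, h⟩ else Fin.cast (dif_pos h) t.2))
                (B ⟨j, h⟩ (Fin.cast (dif_pos h) t.2)))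
          else 0) := by
    funext j
    by_cases h : j < n
    · ext p q'
      simp only [dif_pos h, Matrix.sum_apply, Matrix.kroneckerMap_apply,
        Fintype.sum_prod_type, Finset.mul_sum]
      refine Finset.sum_congr rfl fun bb _ => ?_
      refine (Fintype.sum_equiv (finCongr (dif_pos h :
        (if h : j < n then N ⟨j, h⟩ else 1) = N ⟨j, h⟩)) _ _ fun τ => ?_).symm
      rfl
    · simp only [dif_neg h, Finset.sum_const_zero]
  rw [hK]
  have h1 : ∀ (a : Fin (d 0)) (b : Fin (e 0)) (q : Fin (r n) × (Fin (d n) × Fin (e n))),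
      layerProd (fun j => Fin (r j) × (Fin (d j) × Fin (e j)))
        (fun j : ℕ => ∑ t : Bool × Fin (if h : j < n then N ⟨j, h⟩ else 1),
          if h : j < n then
            Matrix.kroneckerMap (· * ·) (H ⟨j, h⟩ t.1)
              (Matrix.kroneckerMap (· * ·)
                (A ⟨j, h⟩ (if t.1 then x ⟨j, h⟩ else Fin.cast (dif_pos h) t.2))
                (B ⟨j, h⟩ (Fin.cast (dif_pos h) t.2)))
          else 0) n (Fin.cast hr0.symm i, (a, b)) q
      = ∑ f : ∀ j : Fin n, Bool × Fin (if h : (j : ℕ) < n then N ⟨j, h⟩ else 1),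
          layerProd (fun j => Fin (r j))
              (fun j => if h : j < n then H ⟨j, h⟩ (f ⟨j, h⟩).1 else 0) n
              (Fin.cast hr0.symm i) q.1
            * (layerProd (fun j => Fin (d j))
                (fun j => if h : j < n then
                    A ⟨j, h⟩ (if (f ⟨j, h⟩).1 then x ⟨j, h⟩
                      else Fin.cast (dif_pos h) (f ⟨j, h⟩).2)
                  else 0) n a q.2.1
              * layerProd (fun j => Fin (e j))
                  (fun j => if h : j < n then
                    B ⟨j, h⟩ (Fin.cast (dif_pos h) (f ⟨j, h⟩).2) else 0) n b q.2.2) := by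
    intro a b q
    rw [layerProd_sum]
    refine Finset.sum_congr rfl fun f _ => ?_
    have hD : (fun j : ℕ => if hj : j < n then
          (if h : j < n then
            (Matrix.kroneckerMap (· * ·) (H ⟨j, h⟩ (f ⟨j, hj⟩).1)
              (Matrix.kroneckerMap (· * ·)
                (A ⟨j, h⟩ (if (f ⟨j, hj⟩).1 then x ⟨j, h⟩
                  else Fin.cast (dif_pos h) (f ⟨j, hj⟩).2))
                (B ⟨j, h⟩ (Fin.cast (dif_pos h) (f ⟨j, hj⟩).2)))
              : Matrix (Fin (r j) × (Fin (d j) × Fin (e j)))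
                  (Fin (r (j + 1)) × (Fin (d (j + 1)) × Fin (e (j + 1)))) ℝ)
          else 0) else 0)
        = fun j : ℕ =>
            Matrix.kroneckerMap (· * ·)
              (if h : j < n then H ⟨j, h⟩ (f ⟨j, h⟩).1 else 0)
              (Matrix.kroneckerMap (· * ·)
                (if h : j < n then
                  A ⟨j, h⟩ (if (f ⟨j, h⟩).1 then x ⟨j, h⟩
                    else Fin.cast (dif_pos h) (f ⟨j, h⟩).2) else 0)
                (if h : j < n then
                  B ⟨j, h⟩ (Fin.cast (dif_pos h) (f ⟨j, h⟩).2) else 0)) := by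
      funext j
      by_cases h : j < n
      · simp only [dif_pos h]
      · simp only [dif_neg h]
        ext p q'
        simp [Matrix.kroneckerMap_apply]
    rw [hD, layerProd_kron (fun j => Fin (r j)) (fun j => Fin (d j) × Fin (e j)),
      layerProd_kron (fun j => Fin (d j)) (fun j => Fin (e j))]
  simp only [h1]
  rw [sum_reorder4]
  rw [← Equiv.sum_comp (boolProdEquiv n N), Fintype.sum_prod_type]
  refine Finset.sum_congr rfl fun s _ => ?_
  rw [margValue, Finset.mul_sum]
  refine Finset.sum_congr rfl fun x' _ => ?_
  rw [hW, hP, hM,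
    show mergeDo x x' (Finset.univ.filter (fun l => s l = true))
      = fun l => if s l then x l else x' l from funext fun l => by simp [mergeDo]]
  refine Eq.trans (sum_factor3 _ _ _) ?_
  rfl
end
end
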